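/- τ_∞ = 1 - (1/2)·Ξ(1/2), where τ_∞ = ∑_{k≥1} t_k·2^{-k} with t_k the Thue-Morse sequence and Ξ(z) = ∏_{n=0}^∞ (1 - z^{2^n}). -/

import Mathlib

/-!
Expanding `∏_{n<N} (1 - x^{2^n})` produces every `k < 2^N` exactly once, from its binary digits,
with sign `(-1)^{s(k)}` where `s` is the binary digit sum. Hence `Ξ(x) = ∑ (-1)^{t_k} x^k`, and at
`x = 1/2`, writing `(-1)^{t_k} = 1 - 2 t_k` gives `Ξ(1/2) = 2 - 2 τ_∞`.
-/

open Finset Filter Topology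

theorem Nat.digits_sum_add_base_pow {b N k : ℕ} (hb : 1 < b) (hk : k < b ^ N) :
    (b.digits (k + b ^ N)).sum = (b.digits k).sum + 1 := by
  have h := Nat.digits_append_zeroes_append_digits (k := N - (b.digits k).length) (m := 1)
    (n := k) hb one_pos
  rw [Nat.add_sub_cancel' ((Nat.digits_length_le_iff hb k).2 hk), mul_one] at h
  simp [← h, Nat.digits_of_lt b 1 one_ne_zero hb]

theorem neg_one_pow_eq_one_sub_two_mul_mod_two {R : Type*} [Ring R] (n : ℕ) :
    (-1 : R) ^ n = 1 - 2 * ((n % 2 : ℕ) : R) := by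
  rcases Nat.mod_two_eq_zero_or_one n with h | h
  · rw [h, (Nat.even_iff.2 h).neg_one_pow]; simp
  · rw [h, (Nat.odd_iff.2 h).neg_one_pow]; norm_num

theorem prod_range_one_sub_pow_two_pow {R : Type*} [CommRing R] (x : R) (N : ℕ) :
    ∏ n ∈ range N, (1 - x ^ 2 ^ n) =
      ∑ k ∈ range (2 ^ N), (-1) ^ (Nat.digits 2 k).sum * x ^ k := by
  induction N with
  | zero => simp
  | succ N ih =>
    have hflip : ∀ k ∈ range (2 ^ N),
        (-1 : R) ^ (Nat.digits 2 (2 ^ N + k)).sum * x ^ (2 ^ N + k) =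
          -((-1) ^ (Nat.digits 2 k).sum * x ^ k * x ^ 2 ^ N) := fun k hk => by
      rw [add_comm, Nat.digits_sum_add_base_pow one_lt_two (mem_range.1 hk), pow_add, pow_succ]
      ring
    rw [prod_range_succ, ih, pow_succ, mul_two, sum_range_add, sum_congr rfl hflip,
      sum_neg_distrib, ← sum_mul]
    ring

section NormedRing

variable {R : Type*} [NormedCommRing R] [NormOneClass R] [CompleteSpace R] {x : R}

theorem summable_neg_one_pow_digits_sum_mul_pow (hx : ‖x‖ < 1) :
    Summable fun k => (-1 : R) ^ (Nat.digits 2 k).sum * x ^ k := by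
  refine .of_norm_bounded (summable_geometric_of_lt_one (norm_nonneg x) hx) fun k => ?_
  rcases neg_one_pow_eq_or R (Nat.digits 2 k).sum with h | h <;>
    simpa [h] using norm_pow_le x k

theorem hasProd_one_sub_pow_two_pow (hx : ‖x‖ < 1) :
    HasProd (fun n => 1 - x ^ 2 ^ n) (∑' k, (-1) ^ (Nat.digits 2 k).sum * x ^ k) := by
  have hmult : Multipliable fun n => 1 - x ^ 2 ^ n := by
    simp_rw [sub_eq_add_neg]
    refine multipliable_one_add_of_summable <|
      .of_nonneg_of_le (fun _ => norm_nonneg _) (fun n => ?_)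
        (summable_geometric_of_lt_one (norm_nonneg x) hx)
    rw [norm_neg]
    exact (norm_pow_le' x (Nat.two_pow_pos n)).trans
      (pow_le_pow_of_le_one (norm_nonneg x) hx.le n.lt_two_pow_self.le)
  have hpartial : Tendsto (fun N => ∏ n ∈ range N, (1 - x ^ 2 ^ n)) atTop
      (𝓝 (∑' k, (-1) ^ (Nat.digits 2 k).sum * x ^ k)) := by
    simp_rw [prod_range_one_sub_pow_two_pow]
    exact (summable_neg_one_pow_digits_sum_mul_pow hx).hasSum.tendsto_sum_nat.comp
      (tendsto_pow_atTop_atTop_of_one_lt one_lt_two)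
  rw [← tendsto_nhds_unique hmult.hasProd.tendsto_prod_nat hpartial]
  exact hmult.hasProd

end NormedRing

theorem stmt_13 (t : ℕ → ℕ) (ht : ∀ k, t k = (Nat.digits 2 k).sum % 2) :
    ∑' k : ℕ, (t (k + 1) : ℝ) / 2 ^ (k + 1) =
      1 - (1 / 2) * ∏' n : ℕ, (1 - ((1 : ℝ) / 2) ^ 2 ^ n) := by
  have hx : ‖(1 / 2 : ℝ)‖ < 1 := by norm_num
  rw [(hasProd_one_sub_pow_two_pow hx).tprod_eq]
  have hsign : HasSum (fun k => (1 - 2 * (t k : ℝ)) * (1 / 2) ^ k)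
      (∑' k, (-1) ^ (Nat.digits 2 k).sum * (1 / 2 : ℝ) ^ k) := by
    simpa only [neg_one_pow_eq_one_sub_two_mul_mod_two, ← ht] using
      (summable_neg_one_pow_digits_sum_mul_pow hx).hasSum
  have hterm (k : ℕ) :
      ((1 / 2 : ℝ) ^ k - (1 - 2 * (t k : ℝ)) * (1 / 2) ^ k) / 2 = t k / 2 ^ k := by
    rw [one_div_pow]; ring
  have hτ := (hasSum_geometric_two.sub hsign).div_const 2
  simp only [hterm] at hτ
  rw [← hasSum_nat_add_iff' 1] at hτ
  have ht0 : t 0 = 0 := by simp [ht]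
  rw [hτ.tsum_eq, sum_range_one, ht0, Nat.cast_zero, zero_div, sub_zero]
  ring
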